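/- arXiv:1901.00119 — 3 statements merged into one kernel-verified Lean document; each statement's English description precedes it below -/
import Mathlib

section
/- Let g : ℂ → ℂ be an entire function of growth order strictly less than 1 (i.e., for some ρ < 1 and C > 0, |g(λ)| ≤ C·exp(|λ|^ρ) for all λ). If |g(iy)| → 0 as |y| → ∞ with y ∈ ℝ, then g ≡ 0. -/
open Complex Filter Asymptotics Bornology Set

/-!
On the imaginary axis `g` is bounded, say by `M`. The function `w ↦ g (I * w ^ 2)` has order
`2 * ρ < 2` and maps both coordinate axes into the imaginary axis, so Phragmén–Lindelöf in each of
the four quadrants bounds it by `M` on all of `ℂ`. Since `w ↦ I * w ^ 2` is onto, `g` is bounded,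
hence constant by Liouville, and the decay along the imaginary axis forces the constant to vanish.
-/

theorem Continuous.exists_norm_le_of_tendsto_cocompact {X E : Type*} [TopologicalSpace X]
    [SeminormedAddCommGroup E] {f : X → E} (hf : Continuous f)
    (h : Tendsto (fun x => ‖f x‖) (cocompact X) (nhds 0)) : ∃ M, ∀ x, ‖f x‖ ≤ M := by
  have hO : f =O[cocompact X] (1 : X → ℝ) :=
    (isLittleO_one_iff ℝ).2 (tendsto_zero_iff_norm_tendsto_zero.2 h) |>.isBigO
  obtain ⟨M, hM⟩ := isBounded_iff_forall_norm_le.1 (hf.isBounded_range_iff_isBigO.2 hO)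
  exact ⟨M, fun x => hM _ (mem_range_self x)⟩

theorem Differentiable.norm_le_of_norm_le_on_axes {f : ℂ → ℂ} (hf : Differentiable ℂ f)
    {c B M : ℝ} (hc : c < 2) (hB : f =O[cobounded ℂ] fun z => Real.exp (B * ‖z‖ ^ c))
    (hre : ∀ x : ℝ, ‖f x‖ ≤ M) (him : ∀ x : ℝ, ‖f (x * I)‖ ≤ M) (z : ℂ) : ‖f z‖ ≤ M := by
  have hB' {S : Set ℂ} : ∃ c < (2 : ℝ), ∃ B,
      f =O[cobounded ℂ ⊓ 𝓟 S] fun z => Real.exp (B * ‖z‖ ^ c) :=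
    ⟨c, hc, B, hB.mono inf_le_left⟩
  rcases le_total 0 z.re with hz_re | hz_re <;> rcases le_total 0 z.im with hz_im | hz_im
  · exact PhragmenLindelof.quadrant_I hf.diffContOnCl hB' (fun x _ => hre x)
      (fun x _ => him x) hz_re hz_im
  · exact PhragmenLindelof.quadrant_IV hf.diffContOnCl hB' (fun x _ => hre x)
      (fun x _ => him x) hz_re hz_im
  · exact PhragmenLindelof.quadrant_II hf.diffContOnCl hB' (fun x _ => hre x)
      (fun x _ => him x) hz_re hz_im
  · exact PhragmenLindelof.quadrant_III hf.diffContOnCl hB' (fun x _ => hre x)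
      (fun x _ => him x) hz_re hz_im

theorem isBigO_comp_I_mul_sq_exp_rpow {f : ℂ → ℂ} {C ρ : ℝ}
    (h : ∀ z, ‖f z‖ ≤ C * Real.exp (‖z‖ ^ ρ)) (l : Filter ℂ) :
    (fun w => f (I * w ^ 2)) =O[l] fun w => Real.exp (1 * ‖w‖ ^ (2 * ρ)) := by
  refine isBigO_iff.2 ⟨C, Eventually.of_forall fun w => ?_⟩
  have hnorm : ‖I * w ^ 2‖ ^ ρ = ‖w‖ ^ (2 * ρ) := by
    rw [norm_mul, norm_I, one_mul, norm_pow, Real.rpow_mul (norm_nonneg w), Real.rpow_two]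
  rw [Real.norm_of_nonneg (Real.exp_pos _).le, one_mul, ← hnorm]
  exact h (I * w ^ 2)

theorem Differentiable.norm_le_of_norm_le_on_imaginary_axis {g : ℂ → ℂ} (hg : Differentiable ℂ g)
    {ρ C M : ℝ} (hρ : ρ < 1) (hgrow : ∀ z, ‖g z‖ ≤ C * Real.exp (‖z‖ ^ ρ))
    (hM : ∀ y : ℝ, ‖g (y * I)‖ ≤ M) (z : ℂ) : ‖g z‖ ≤ M := by
  have hsq : Differentiable ℂ fun w => g (I * w ^ 2) := hg.comp (by fun_prop)
  have hsq_bound (w : ℂ) : ‖g (I * w ^ 2)‖ ≤ M := by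
    refine hsq.norm_le_of_norm_le_on_axes (by linarith : 2 * ρ < 2)
      (isBigO_comp_I_mul_sq_exp_rpow hgrow _) (fun x => ?_) (fun x => ?_) w
    · simpa [← ofReal_pow, mul_comm I] using hM (x ^ 2)
    · simpa [mul_pow, ← ofReal_pow, ← mul_assoc, mul_comm I] using hM (-x ^ 2)
  obtain ⟨w, hw⟩ := IsAlgClosed.exists_pow_nat_eq (-I * z) two_pos
  simpa [hw, ← mul_assoc] using hsq_bound w

theorem stmt5_general (g : ℂ → ℂ) (hg : Differentiable ℂ g)
    (ρ : ℝ) (hρ : ρ < 1) (C : ℝ)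
    (hgrow : ∀ z : ℂ, ‖g z‖ ≤ C * Real.exp (‖z‖ ^ ρ))
    (hdecay : Tendsto (fun y : ℝ => ‖g (y * Complex.I)‖) (cocompact ℝ) (nhds 0)) :
    ∀ z : ℂ, g z = 0 := by
  obtain ⟨M, hM⟩ : ∃ M, ∀ y : ℝ, ‖g (y * I)‖ ≤ M :=
    (hg.continuous.comp (continuous_ofReal.mul continuous_const)
      |>.exists_norm_le_of_tendsto_cocompact hdecay)
  have hbounded : IsBounded (range g) := isBounded_iff_forall_norm_le.2
    ⟨M, forall_mem_range.2 (hg.norm_le_of_norm_le_on_imaginary_axis hρ hgrow hM)⟩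
  have hconst (z : ℂ) : g z = g 0 := hg.apply_eq_apply_of_bounded hbounded z 0
  have hdecay₀ : Tendsto (fun _ : ℝ => ‖g 0‖) (cocompact ℝ) (nhds 0) :=
    hdecay.congr fun y => by rw [hconst]
  intro z
  rw [hconst, ← norm_eq_zero]
  exact tendsto_nhds_unique tendsto_const_nhds hdecay₀

/-- An entire function of growth order strictly less than 1 that
tends to `0` along the imaginary axis (as `|y| → ∞`, `y ∈ ℝ`) vanishes identically. -/
theorem stmt5 (g : ℂ → ℂ) (hg : Differentiable ℂ g)
    (ρ : ℝ) (hρ : ρ < 1) (C : ℝ) (hC : 0 < C)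
    (hgrow : ∀ z : ℂ, ‖g z‖ ≤ C * Real.exp (‖z‖ ^ ρ))
    (hdecay : Tendsto (fun y : ℝ => ‖g (y * Complex.I)‖) (cocompact ℝ) (nhds 0)) :
    ∀ z : ℂ, g z = 0 :=
  stmt5_general g hg ρ hρ C hgrow hdecay
end

section
/- Let g ∈ L¹([0,x], ℂ). Then as |λ| → ∞ in ℂ, ∫₀ˣ sin(√λ t) g(t) dt = o(exp(|Im √λ| x)) and ∫₀ˣ cos(√λ t) g(t) dt = o(exp(|Im √λ| x)); that is, for every ε > 0 there is R with |∫₀ˣ sin(√λ t) g(t) dt| ≤ ε exp(|Im √λ| x) for all |λ| ≥ R, and likewise for cos. -/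
/-!
Since `sin` and `cos` are combinations of `exp (± I w t)`, it suffices to show
`∫₀ˣ exp (z t) g(t) dt = o(exp (|Re z| x))` as `‖z‖ → ∞`. On `[0, x]` we have
`‖exp (z t)‖ ≤ exp (|Re z| x)`, so the set of `g` with this property is closed in `L¹[0, x]`.
For `C¹` functions, integration by parts even gives `O(exp (|Re z| x) / ‖z‖)`, and these are
dense: approximate `g` by a compactly supported continuous function, and that one uniformly by a
smooth function.
-/

open Complex intervalIntegral MeasureTheory Filter Asymptotics Bornology

section

variable {x : ℝ}

theorem norm_cexp_mul_ofReal_le (z : ℂ) {t : ℝ} (ht : t ∈ Set.Icc 0 x) :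
    ‖exp (z * t)‖ ≤ Real.exp (|z.re| * x) := by
  rw [norm_exp, re_mul_ofReal, Real.exp_le_exp]
  calc z.re * t ≤ |z.re| * t := by gcongr; exacts [ht.1, le_abs_self _]
    _ ≤ |z.re| * x := by gcongr; exact ht.2

theorem norm_integral_cexp_mul_le (hx : 0 ≤ x) (z : ℂ) {f : ℝ → ℂ}
    (hf : IntervalIntegrable f volume 0 x) :
    ‖∫ t in 0..x, exp (z * t) * f t‖ ≤ Real.exp (|z.re| * x) * ∫ t in 0..x, ‖f t‖ := by
  rw [← intervalIntegral.integral_const_mul]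
  refine norm_integral_le_of_norm_le hx (ae_of_all _ fun t ht => ?_) (hf.norm.const_mul _)
  rw [norm_mul]
  gcongr
  exact norm_cexp_mul_ofReal_le z (Set.Ioc_subset_Icc_self ht)

theorem hasDerivAt_cexp_mul_ofReal (z : ℂ) (t : ℝ) :
    HasDerivAt (fun t : ℝ => exp (z * t)) (exp (z * t) * z) t := by
  simpa using ((hasDerivAt_id t).ofReal_comp.const_mul z).cexp

theorem norm_integral_cexp_mul_le_of_contDiff (hx : 0 ≤ x) {z : ℂ} (hz : z ≠ 0) {h : ℝ → ℂ}
    (hh : ContDiff ℝ 1 h) :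
    ‖∫ t in 0..x, exp (z * t) * h t‖ ≤
      Real.exp (|z.re| * x) * (‖h 0‖ + ‖h x‖ + ∫ t in 0..x, ‖deriv h t‖) / ‖z‖ := by
  have hderiv : Continuous (deriv h) := hh.continuous_deriv le_rfl
  have hparts : z * ∫ t in 0..x, exp (z * t) * h t =
      h x * exp (z * x) - h 0 - ∫ t in 0..x, exp (z * t) * deriv h t := by
    have := integral_mul_deriv_eq_deriv_mul
      (fun t _ => (hh.differentiable one_ne_zero t).hasDerivAt)
      (fun t _ => hasDerivAt_cexp_mul_ofReal z t) (hderiv.intervalIntegrable 0 x)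
      ((by fun_prop : Continuous fun t : ℝ => exp (z * t) * z).intervalIntegrable 0 x)
    rw [← intervalIntegral.integral_const_mul]
    simp only [ofReal_zero, mul_zero, exp_zero, mul_one] at this
    convert this using 2
    · ext t; ring
    · congr 1; ext t; ring
  have hE : 1 ≤ Real.exp (|z.re| * x) := Real.one_le_exp (by positivity)
  have hint : 0 ≤ ∫ t in 0..x, ‖deriv h t‖ := integral_nonneg hx fun _ _ => norm_nonneg _
  rw [le_div_iff₀ (norm_pos_iff.2 hz), mul_comm, ← norm_mul, hparts]
  calc ‖h x * exp (z * x) - h 0 - ∫ t in 0..x, exp (z * t) * deriv h t‖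
      ≤ ‖h x‖ * Real.exp (|z.re| * x) + ‖h 0‖ +
          Real.exp (|z.re| * x) * ∫ t in 0..x, ‖deriv h t‖ := by
        refine (norm_sub_le _ _).trans (add_le_add ((norm_sub_le _ _).trans ?_) ?_)
        · rw [norm_mul]
          gcongr
          exact norm_cexp_mul_ofReal_le z ⟨hx, le_rfl⟩
        · exact norm_integral_cexp_mul_le hx z (hderiv.intervalIntegrable 0 x)
    _ ≤ Real.exp (|z.re| * x) * (‖h 0‖ + ‖h x‖ + ∫ t in 0..x, ‖deriv h t‖) := by
        nlinarith [norm_nonneg (h 0)]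

theorem isLittleO_integral_cexp_mul_of_contDiff (hx : 0 ≤ x) {h : ℝ → ℂ} (hh : ContDiff ℝ 1 h) :
    (fun z : ℂ => ∫ t in 0..x, exp (z * t) * h t) =o[cobounded ℂ]
      fun z => Real.exp (|z.re| * x) := by
  set C := ‖h 0‖ + ‖h x‖ + ∫ t in 0..x, ‖deriv h t‖
  have hC : 0 ≤ C := by
    have : 0 ≤ ∫ t in 0..x, ‖deriv h t‖ := integral_nonneg hx fun t _ => norm_nonneg _
    positivity
  refine isLittleO_iff.2 fun ε hε => ?_
  filter_upwards [eventually_cobounded_le_norm (C / ε + 1)] with z hz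
  have hz₀ : 0 < ‖z‖ := by linarith [div_nonneg hC hε.le]
  have hCz : C / ‖z‖ ≤ ε := by
    rw [div_le_iff₀ hz₀]
    nlinarith [div_mul_cancel₀ C hε.ne']
  rw [Real.norm_of_nonneg (Real.exp_pos _).le]
  calc ‖∫ t in 0..x, exp (z * t) * h t‖ ≤ Real.exp (|z.re| * x) * C / ‖z‖ :=
        norm_integral_cexp_mul_le_of_contDiff hx (norm_pos_iff.1 hz₀) hh
    _ ≤ ε * Real.exp (|z.re| * x) := by
        rw [mul_div_assoc, mul_comm]
        gcongr

theorem isLittleO_integral_cexp_mul_of_approx (hx : 0 ≤ x) {g : ℝ → ℂ}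
    (hg : IntervalIntegrable g volume 0 x)
    (happrox : ∀ ε > 0, ∃ h : ℝ → ℂ, IntervalIntegrable h volume 0 x ∧
      (fun z : ℂ => ∫ t in 0..x, exp (z * t) * h t) =o[cobounded ℂ]
        (fun z => Real.exp (|z.re| * x)) ∧
      ∫ t in 0..x, ‖g t - h t‖ ≤ ε) :
    (fun z : ℂ => ∫ t in 0..x, exp (z * t) * g t) =o[cobounded ℂ]
      fun z => Real.exp (|z.re| * x) := by
  refine isLittleO_iff.2 fun ε hε => ?_
  obtain ⟨h, hh, hho, hgh⟩ := happrox (ε / 2) (half_pos hε)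
  filter_upwards [hho.def (half_pos hε)] with z hz
  have hexp : Continuous fun t : ℝ => exp (z * t) := by fun_prop
  have hsplit : ∫ t in 0..x, exp (z * t) * g t =
      (∫ t in 0..x, exp (z * t) * (g t - h t)) + ∫ t in 0..x, exp (z * t) * h t := by
    rw [← integral_add ((hg.sub hh).continuousOn_mul hexp.continuousOn)
      (hh.continuousOn_mul hexp.continuousOn)]
    congr 1; ext t; ring
  rw [Real.norm_of_nonneg (Real.exp_pos _).le] at hz ⊢
  calc ‖∫ t in 0..x, exp (z * t) * g t‖
      ≤ Real.exp (|z.re| * x) * (ε / 2) + ε / 2 * Real.exp (|z.re| * x) := by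
        rw [hsplit]
        refine (norm_add_le _ _).trans (add_le_add ?_ hz)
        exact (norm_integral_cexp_mul_le hx z (hg.sub hh)).trans (by gcongr)
    _ = ε * Real.exp (|z.re| * x) := by ring

theorem isLittleO_integral_cexp_mul_of_uniformContinuous (hx : 0 ≤ x) {h : ℝ → ℂ}
    (hh : UniformContinuous h) :
    (fun z : ℂ => ∫ t in 0..x, exp (z * t) * h t) =o[cobounded ℂ]
      fun z => Real.exp (|z.re| * x) := by
  refine isLittleO_integral_cexp_mul_of_approx hx (hh.continuous.intervalIntegrable _ _)
    fun ε hε => ?_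
  obtain ⟨k, hk, hhk⟩ := hh.exists_contDiff_dist_le (ε := ε / (x + 1)) (by positivity)
  refine ⟨k, hk.continuous.intervalIntegrable _ _,
    isLittleO_integral_cexp_mul_of_contDiff hx (hk.of_le (by simp)), ?_⟩
  calc ∫ t in 0..x, ‖h t - k t‖ ≤ ∫ _ in 0..x, ε / (x + 1) :=
        integral_mono_on hx ((hh.continuous.sub hk.continuous).norm.intervalIntegrable _ _)
          intervalIntegrable_const fun t _ => by
            rw [← dist_eq_norm, dist_comm]; exact (hhk t).le
    _ ≤ ε := by
        rw [intervalIntegral.integral_const, smul_eq_mul, sub_zero, mul_div_assoc',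
          div_le_iff₀ (by positivity)]
        nlinarith

theorem isLittleO_integral_cexp_mul (hx : 0 ≤ x) {g : ℝ → ℂ}
    (hg : IntervalIntegrable g volume 0 x) :
    (fun z : ℂ => ∫ t in 0..x, exp (z * t) * g t) =o[cobounded ℂ]
      fun z => Real.exp (|z.re| * x) := by
  refine isLittleO_integral_cexp_mul_of_approx hx hg fun ε hε => ?_
  obtain ⟨h, hsupp, hgh, hcont, -⟩ :=
    (hg.1 : Integrable g (volume.restrict (Set.Ioc 0 x))).exists_hasCompactSupport_integral_sub_le
      hε
  exact ⟨h, hcont.intervalIntegrable _ _, isLittleO_integral_cexp_mul_of_uniformContinuous hx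
    (hsupp.uniformContinuous_of_continuous hcont), by rwa [integral_of_le hx]⟩

theorem isLittleO_integral_cexp_I_mul (hx : 0 ≤ x) {g : ℝ → ℂ}
    (hg : IntervalIntegrable g volume 0 x) {c : ℂ} (hc : c = I ∨ c = -I) :
    (fun w : ℂ => ∫ t in 0..x, exp (c * w * t) * g t) =o[cobounded ℂ]
      fun w => Real.exp (|w.im| * x) := by
  have hnorm : ‖c‖ = 1 := by rcases hc with rfl | rfl <;> simp
  have hre : ∀ w, |(c * w).re| = |w.im| := by rcases hc with rfl | rfl <;> simp
  have hk : Tendsto (c * ·) (cobounded ℂ) (cobounded ℂ) :=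
    tendsto_norm_atTop_iff_cobounded.1 <| by
      simpa [hnorm] using tendsto_norm_cobounded_atTop (E := ℂ)
  simpa only [Function.comp_def, hre] using (isLittleO_integral_cexp_mul hx hg).comp_tendsto hk

theorem integral_sin_mul_eq {g : ℝ → ℂ} (hg : IntervalIntegrable g volume 0 x) (w : ℂ) :
    ∫ t in 0..x, sin (w * t) * g t =
      I / 2 * ((∫ t in 0..x, exp (-I * w * t) * g t) - ∫ t in 0..x, exp (I * w * t) * g t) := by
  rw [← integral_sub (hg.continuousOn_mul (by fun_prop)) (hg.continuousOn_mul (by fun_prop)),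
    ← intervalIntegral.integral_const_mul]
  congr 1; ext t
  rw [sin, show -(w * t) * I = -I * w * t by ring, show w * t * I = I * w * t by ring]
  ring

theorem integral_cos_mul_eq {g : ℝ → ℂ} (hg : IntervalIntegrable g volume 0 x) (w : ℂ) :
    ∫ t in 0..x, cos (w * t) * g t =
      1 / 2 * ((∫ t in 0..x, exp (I * w * t) * g t) + ∫ t in 0..x, exp (-I * w * t) * g t) := by
  rw [← integral_add (hg.continuousOn_mul (by fun_prop)) (hg.continuousOn_mul (by fun_prop)),
    ← intervalIntegral.integral_const_mul]
  congr 1; ext t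
  rw [cos, show w * t * I = I * w * t by ring, show -(w * t) * I = -I * w * t by ring]
  ring

end

/-- complex-frequency Riemann–Lebesgue: for `g ∈ L¹[0,x]`,
`∫₀ˣ sin(√λ t) g(t) dt = o(exp(|Im √λ| x))` and
`∫₀ˣ cos(√λ t) g(t) dt = o(exp(|Im √λ| x))` as `|λ| → ∞`
(here `w = √λ` is a fixed branch of the square root, so `|λ| → ∞ ↔ |w| → ∞`). -/
theorem stmt13 (x : ℝ) (hx : 0 ≤ x) (g : ℝ → ℂ)
    (hg : MeasureTheory.IntegrableOn g (Set.Icc 0 x)) :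
    ∀ ε > (0:ℝ), ∃ R : ℝ, ∀ w : ℂ, R ≤ ‖w‖ →
      ‖∫ t in (0:ℝ)..x, Complex.sin (w * (t : ℂ)) * g t‖
          ≤ ε * Real.exp (|w.im| * x) ∧
      ‖∫ t in (0:ℝ)..x, Complex.cos (w * (t : ℂ)) * g t‖
          ≤ ε * Real.exp (|w.im| * x) := by
  have hgi : IntervalIntegrable g volume 0 x :=
    (intervalIntegrable_iff_integrableOn_Icc_of_le hx).2 hg
  have hplus := isLittleO_integral_cexp_I_mul hx hgi (c := I) (.inl rfl)
  have hminus := isLittleO_integral_cexp_I_mul hx hgi (c := -I) (.inr rfl)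
  have hsin := ((hminus.sub hplus).const_mul_left (I / 2)).congr_left
    fun w => (integral_sin_mul_eq hgi w).symm
  have hcos := ((hplus.add hminus).const_mul_left (1 / 2)).congr_left
    fun w => (integral_cos_mul_eq hgi w).symm
  intro ε hε
  obtain ⟨R, -, hR⟩ := hasBasis_cobounded_norm.eventually_iff.1 ((hsin.def hε).and (hcos.def hε))
  refine ⟨R, fun w hw => ?_⟩
  simpa only [Real.norm_of_nonneg (Real.exp_pos _).le] using hR hw
end

section
/- Suppose m_n, k_n ∈ ℕ with 1 ≤ k_n ≤ m_n, and suppose complex numbers κ_{n+j}, α_{n+j}, κ̃_{n+j}, α̃_{n+j} (0 ≤ j ≤ m_n − 1) satisfy α_{n+ν} = α̃_{n+ν} for ν = 0,…,k_n−1. Define, for entire functions φ(π,·), φ̃(π,·), Δ, Δ̃ with Δ^{(k)}(λ_n) = Δ̃^{(k)}(λ_n) = 0 for k = 0,…,m_n−1 and Δ^{(m_n+ν)}(λ_n) = −(m_n+ν)! Σ_{j=0}^{ν} κ_{n+j} α_{n+ν−j} (and the analogous relation for Δ̃), the function F(λ) := φ(π,λ)Δ̃(λ) − φ̃(π,λ)Δ(λ),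 where additionally (1/ν!)(d/dλ)^ν φ(π,λ)|_{λ_n} = κ_{n+ν} and likewise for φ̃ and κ̃. Then F^{(k)}(λ_n) = 0 for k = 0,…,m_n + k_n − 1; i.e., λ_n is a zero of F of order at least m_n + k_n. -/
/-!
Pass to Taylor series at `λₙ` in `ℂ⟦X⟧`, where the Leibniz rule becomes multiplication. With
`K = Σ κ_ν Xᵛ`, `A = Σ α_ν Xᵛ` (and tilde analogues), the hypotheses say `T φ ≡ K` modulo `Xᵏ` and
`T Δ ≡ -Xᵐ K A` modulo `Xᵐ⁺ᵏ`, and `A ≡ Ã` modulo `Xᵏ`. Hence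
`T F ≡ -Xᵐ (K K̃ A - K̃ K A) = 0` modulo `Xᵐ⁺ᵏ`: the paper's index-reversal symmetry is the
commutativity of the product of power series.
-/

open Finset PowerSeries
open scoped ContDiff

theorem mul_dvd_mul_sub_mul_of_dvd {R : Type*} [CommRing R] {x y p p' d d' c c' a a' : R}
    (hd : x * y ∣ d + x * (c * a)) (hd' : x * y ∣ d' + x * (c' * a'))
    (hp : y ∣ p - c) (hp' : y ∣ p' - c') (ha : y ∣ a - a') :
    x * y ∣ p * d' - p' * d := by
  obtain ⟨e, he⟩ := hd
  obtain ⟨e', he'⟩ := hd'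
  obtain ⟨f, hf⟩ := hp
  obtain ⟨f', hf'⟩ := hp'
  obtain ⟨g, hg⟩ := ha
  -- modulo `y`, `p * (c' * a') - p' * (c * a) ≡ c * (c' * a) - c' * (c * a) = 0`
  refine ⟨p * e' - p' * e - (f * c' * a' - f' * c * a - c * c' * g), ?_⟩
  linear_combination p * he' - p' * he - x * c' * a' * hf + x * c * a * hf' + x * c * c' * hg

section Taylor

variable {𝕜 : Type*} [NontriviallyNormedField 𝕜] {f g : 𝕜 → 𝕜} {x : 𝕜}

noncomputable def taylorSeries (f : 𝕜 → 𝕜) (x : 𝕜) : 𝕜⟦X⟧ :=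
  PowerSeries.mk fun n => iteratedDeriv n f x / n.factorial

theorem coeff_taylorSeries (n : ℕ) :
    coeff n (taylorSeries f x) = iteratedDeriv n f x / n.factorial :=
  coeff_mk _ _

theorem taylorSeries_sub (hf : ContDiffAt 𝕜 ∞ f x) (hg : ContDiffAt 𝕜 ∞ g x) :
    taylorSeries (f - g) x = taylorSeries f x - taylorSeries g x := by
  ext n
  simp only [map_sub, coeff_taylorSeries, sub_div,
    iteratedDeriv_sub (hf.of_le (mod_cast le_top)) (hg.of_le (mod_cast le_top))]

theorem taylorSeries_mul [CharZero 𝕜] (hf : ContDiffAt 𝕜 ∞ f x)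
    (hg : ContDiffAt 𝕜 ∞ g x) :
    taylorSeries (f * g) x = taylorSeries f x * taylorSeries g x := by
  ext n
  rw [coeff_mul, Nat.sum_antidiagonal_eq_sum_range_succ
      (fun i j => coeff i (taylorSeries f x) * coeff j (taylorSeries g x)), coeff_taylorSeries,
    iteratedDeriv_mul (hf.of_le (mod_cast le_top)) (hg.of_le (mod_cast le_top)), sum_div]
  refine sum_congr rfl fun i hi => ?_
  rw [Nat.cast_choose 𝕜 (mem_range_succ_iff.mp hi), coeff_taylorSeries, coeff_taylorSeries]
  have hn : (n.factorial : 𝕜) ≠ 0 := mod_cast n.factorial_ne_zero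
  field_simp

theorem X_pow_dvd_taylorSeries_iff [CharZero 𝕜] {n : ℕ} :
    X ^ n ∣ taylorSeries f x ↔ ∀ i < n, iteratedDeriv i f x = 0 := by
  simp [X_pow_dvd_iff, coeff_taylorSeries, Nat.factorial_ne_zero]

theorem X_pow_dvd_taylorSeries_sub_mk {k : ℕ} {c : ℕ → 𝕜}
    (hc : ∀ ν < k, 1 / (ν.factorial : 𝕜) * iteratedDeriv ν f x = c ν) :
    X ^ k ∣ taylorSeries f x - PowerSeries.mk c := by
  refine X_pow_dvd_iff.mpr fun ν hν => ?_
  rw [map_sub, coeff_taylorSeries, coeff_mk, ← hc ν hν]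
  ring

theorem X_pow_mul_X_pow_dvd_taylorSeries_add [CharZero 𝕜] {m k : ℕ} {c a : ℕ → 𝕜}
    (h0 : ∀ i < m, iteratedDeriv i f x = 0)
    (hd : ∀ ν < k, iteratedDeriv (m + ν) f x
      = -((m + ν).factorial : 𝕜) * ∑ j ∈ range (ν + 1), c j * a (ν - j)) :
    X ^ m * X ^ k ∣ taylorSeries f x + X ^ m * (PowerSeries.mk c * PowerSeries.mk a) := by
  rw [← pow_add, X_pow_dvd_iff]
  intro i hi
  rw [map_add, coeff_X_pow_mul', coeff_taylorSeries]
  split_ifs with him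
  · obtain ⟨ν, rfl⟩ := Nat.exists_eq_add_of_le him
    rw [hd ν (by omega), neg_mul, neg_div,
      mul_div_cancel_left₀ _ (mod_cast (m + ν).factorial_ne_zero), neg_add_eq_zero,
      Nat.add_sub_cancel_left, coeff_mul, Nat.sum_antidiagonal_eq_sum_range_succ
        (fun i j => coeff i (PowerSeries.mk c) * coeff j (PowerSeries.mk a))]
    simp only [coeff_mk]
  · rw [h0 i (not_le.mp him)]
    simp

end Taylor

theorem stmt18_general (φ φt Δ Δt : ℂ → ℂ)
    (hφ : Differentiable ℂ φ) (hφt : Differentiable ℂ φt)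
    (hΔ : Differentiable ℂ Δ) (hΔt : Differentiable ℂ Δt)
    (lamn : ℂ) (m k : ℕ) (hkm : k ≤ m)
    (κ α κt αt : ℕ → ℂ)
    (hΔ0 : ∀ i < m, iteratedDeriv i Δ lamn = 0)
    (hΔt0 : ∀ i < m, iteratedDeriv i Δt lamn = 0)
    (hΔd : ∀ ν < m, iteratedDeriv (m + ν) Δ lamn
      = -((m + ν).factorial : ℂ) * ∑ j ∈ range (ν + 1), κ j * α (ν - j))
    (hΔtd : ∀ ν < m, iteratedDeriv (m + ν) Δt lamn
      = -((m + ν).factorial : ℂ) * ∑ j ∈ range (ν + 1), κt j * αt (ν - j))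
    (hφκ : ∀ ν < m, (1 / (ν.factorial : ℂ)) * iteratedDeriv ν φ lamn = κ ν)
    (hφtκ : ∀ ν < m, (1 / (ν.factorial : ℂ)) * iteratedDeriv ν φt lamn = κt ν)
    (hα : ∀ ν < k, α ν = αt ν) :
    ∀ i < m + k, iteratedDeriv i (fun lam => φ lam * Δt lam - φt lam * Δ lam) lamn = 0 := by
  have hA : X ^ k ∣ PowerSeries.mk α - PowerSeries.mk αt :=
    X_pow_dvd_iff.mpr fun ν hν => by rw [map_sub, coeff_mk, coeff_mk, hα ν hν, sub_self]
  have hF := mul_dvd_mul_sub_mul_of_dvd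
    (X_pow_mul_X_pow_dvd_taylorSeries_add hΔ0 fun ν hν => hΔd ν (hν.trans_le hkm))
    (X_pow_mul_X_pow_dvd_taylorSeries_add hΔt0 fun ν hν => hΔtd ν (hν.trans_le hkm))
    (X_pow_dvd_taylorSeries_sub_mk fun ν hν => hφκ ν (hν.trans_le hkm))
    (X_pow_dvd_taylorSeries_sub_mk fun ν hν => hφtκ ν (hν.trans_le hkm)) hA
  rw [← pow_add, ← taylorSeries_mul hφ.contDiff.contDiffAt hΔt.contDiff.contDiffAt,
    ← taylorSeries_mul hφt.contDiff.contDiffAt hΔ.contDiff.contDiffAt,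
    ← taylorSeries_sub (hφ.mul hΔt).contDiff.contDiffAt
      (hφt.mul hΔ).contDiff.contDiffAt] at hF
  exact X_pow_dvd_taylorSeries_iff.mp hF

/-- algebraic core of Lemma 2.2: with entire `φ(π,·), φ̃(π,·), Δ, Δ̃`,
a common eigenvalue `λₙ` of multiplicity `m` for `Δ` and `Δ̃`, derivative formulas
`Δ^{(m+ν)}(λₙ) = −(m+ν)! Σ_{j≤ν} κ_{n+j} α_{n+ν−j}` (and the tilde analogue),
`(1/ν!) φ^{(ν)}(π,λₙ) = κ_{n+ν}`, and `α_{n+ν} = α̃_{n+ν}` for `ν < k` (`1 ≤ k ≤ m`),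
the function `F = φΔ̃ − φ̃Δ` vanishes at `λₙ` to order at least `m + k`. -/
theorem stmt18 (φ φt Δ Δt : ℂ → ℂ)
    (hφ : Differentiable ℂ φ) (hφt : Differentiable ℂ φt)
    (hΔ : Differentiable ℂ Δ) (hΔt : Differentiable ℂ Δt)
    (lamn : ℂ) (m k : ℕ) (hk1 : 1 ≤ k) (hkm : k ≤ m)
    (κ α κt αt : ℕ → ℂ)
    (hΔ0 : ∀ i < m, iteratedDeriv i Δ lamn = 0)
    (hΔt0 : ∀ i < m, iteratedDeriv i Δt lamn = 0)
    (hΔd : ∀ ν < m, iteratedDeriv (m + ν) Δ lamn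
      = -((m + ν).factorial : ℂ) * ∑ j ∈ range (ν + 1), κ j * α (ν - j))
    (hΔtd : ∀ ν < m, iteratedDeriv (m + ν) Δt lamn
      = -((m + ν).factorial : ℂ) * ∑ j ∈ range (ν + 1), κt j * αt (ν - j))
    (hφκ : ∀ ν < m, (1 / (ν.factorial : ℂ)) * iteratedDeriv ν φ lamn = κ ν)
    (hφtκ : ∀ ν < m, (1 / (ν.factorial : ℂ)) * iteratedDeriv ν φt lamn = κt ν)
    (hα : ∀ ν < k, α ν = αt ν) :
    ∀ i < m + k, iteratedDeriv i (fun lam => φ lam * Δt lam - φt lam * Δ lam) lamn = 0 :=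
  stmt18_general φ φt Δ Δt hφ hφt hΔ hΔt lamn m k hkm κ α κt αt hΔ0 hΔt0 hΔd hΔtd hφκ hφtκ hα
end
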